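/- arXiv:1502.03737 — 8 statements merged into one kernel-verified Lean document; each statement's English description precedes it below -/
import Mathlib

section
/- The function V(x,y) = (x^2 + y^2 - x - y + a)/(x y) is a first integral of the vector field X(x,y) = ((x^2 - y^2 + a - x)/y, (x^2 - y^2 - a + y)/x); that is, ∇V(x,y)·X(x,y) = 0 for all x ≠ 0, y ≠ 0. -/
/-- `V(x,y) = (x^2+y^2-x-y+a)/(xy)` is a first integral of the vector field
`X(x,y) = ((x^2-y^2+a-x)/y, (x^2-y^2-a+y)/x)`: `∇V · X = 0`. -/
theorem BR_first_integral_of_vector_field (a x y : ℝ) (hx : x ≠ 0) (hy : y ≠ 0) :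
    deriv (fun s => (s ^ 2 + y ^ 2 - s - y + a) / (s * y)) x *
        ((x ^ 2 - y ^ 2 + a - x) / y) +
      deriv (fun s => (x ^ 2 + s ^ 2 - x - s + a) / (x * s)) y *
        ((x ^ 2 - y ^ 2 - a + y) / x) = 0 := by
  have h1 : HasDerivAt (fun s : ℝ => (s ^ 2 + y ^ 2 - s - y + a) / (s * y)) 
      (((2 * x - 1) * (x * y) - (x ^ 2 + y ^ 2 - x - y + a) * y) / (x * y) ^ 2) x := by
    have hn : HasDerivAt (fun s : ℝ => s ^ 2 + y ^ 2 - s - y + a) (2 * x - 1) x := by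
      have := ((hasDerivAt_pow 2 x).add_const (y ^ 2)).sub (hasDerivAt_id x)
      simpa using (this.sub_const y).add_const a
    have hd : HasDerivAt (fun s : ℝ => s * y) y x := by
      simpa using (hasDerivAt_id x).mul_const y
    exact hn.div hd (mul_ne_zero hx hy)
  have h2 : HasDerivAt (fun s : ℝ => (x ^ 2 + s ^ 2 - x - s + a) / (x * s)) 
      (((2 * y - 1) * (x * y) - (x ^ 2 + y ^ 2 - x - y + a) * x) / (x * y) ^ 2) y := by
    have hn : HasDerivAt (fun s : ℝ => x ^ 2 + s ^ 2 - x - s + a) (2 * y - 1) y := by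
      have := ((hasDerivAt_pow 2 y).const_add (x ^ 2)).sub_const x
      simpa using (this.sub (hasDerivAt_id y)).add_const a
    have hd : HasDerivAt (fun s : ℝ => x * s) x y := by
      simpa using (hasDerivAt_id y).const_mul x
    exact hn.div hd (mul_ne_zero hx hy)
  rw [h1.deriv, h2.deriv]
  field_simp
  ring
end

section
/- The vector field X(x,y) = ((x^2 - y^2 + a - x)/y, (x^2 - y^2 - a + y)/x) equals μ(x,y)·(-V_y, V_x) with μ(x,y) = x y, where V(x,y) = (x^2 + y^2 - x - y + a)/(x y); moreover μ satisfies μ(F(x,y)) = det(DF(x,y))·μ(x,y) for F(x,y) = (y, (a - y + y^2)/x). -/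
lemma deriv_aux (c b s : ℝ) (hc : c ≠ 0) (hs : s ≠ 0) :
    deriv (fun s => (c ^ 2 + s ^ 2 - c - s + b) / (c * s)) s
      = ((2 * s - 1) * (c * s) - (c ^ 2 + s ^ 2 - c - s + b) * c) / (c * s) ^ 2 := by
  have h1 : HasDerivAt (fun s : ℝ => c ^ 2 + s ^ 2 - c - s + b) (2 * s - 1) s := by
    have := ((hasDerivAt_pow 2 s).const_add (c ^ 2)).sub_const c |>.sub (hasDerivAt_id s)
      |>.add_const b
    simpa using this
  have h2 : HasDerivAt (fun s : ℝ => c * s) c s := by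
    simpa using (hasDerivAt_id s).const_mul c
  have := h1.div h2 (mul_ne_zero hc hs)
  exact this.deriv

/-- `X = μ · (-V_y, V_x)` with `μ(x,y) = xy`, and `μ(F(x,y)) = det(DF(x,y)) · μ(x,y)`
for `F(x,y) = (y, (a-y+y^2)/x)`. -/
theorem BR_hamiltonian_and_measure (a x y : ℝ) (hx : x ≠ 0) (hy : y ≠ 0) :
    ((x ^ 2 - y ^ 2 + a - x) / y =
      x * y * (-(deriv (fun s => (x ^ 2 + s ^ 2 - x - s + a) / (x * s)) y))) ∧
    ((x ^ 2 - y ^ 2 - a + y) / x =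
      x * y * (deriv (fun s => (s ^ 2 + y ^ 2 - s - y + a) / (s * y)) x)) ∧
    (y * ((a - y + y ^ 2) / x) =
      Matrix.det !![0, 1; -(a - y + y ^ 2) / x ^ 2, (2 * y - 1) / x] * (x * y)) := by
  refine ⟨?_, ?_, ?_⟩
  · rw [deriv_aux x a y hx hy]; field_simp; ring
  · have : (fun s => (s ^ 2 + y ^ 2 - s - y + a) / (s * y))
        = fun s => (y ^ 2 + s ^ 2 - y - s + a) / (y * s) := by
      funext s; ring_nf
    rw [this, deriv_aux y a x hy hx]; field_simp; ring
  · simp [Matrix.det_fin_two_of]; field_simp; ring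
end

section
/- For the Saito–Saitoh map F(x,y) = (xy, y(1+x)/(1+xy)) restricted to the curve C_h = {y(1+x) = h} with parametrization P_h(t) = (t, h/(t+1)), one has P_h^{-1} ∘ F ∘ P_h(t) = h t/(t+1), i.e. F(P_h(t)) = P_h(h t/(t+1)) for all t with t ≠ -1, t+1+ht ≠ 0 (so that the expressions are defined). -/
/-! On the curve `y(1+x) = h` the numerator `y(1+x)` of the second coordinate of `F` is `h`, so
`F(x, y) = (xy, h/(1 + xy))`, which is the parametrization evaluated at the new first
coordinate `xy`. -/

section SaitoSaitoh

variable {K : Type*} [Field K]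

def saitoMap (p : K × K) : K × K :=
  (p.1 * p.2, p.2 * (1 + p.1) / (1 + p.1 * p.2))

def hyperbolaParam (h t : K) : K × K :=
  (t, h / (t + 1))

theorem saitoMap_hyperbolaParam (h t : K) (ht : t + 1 ≠ 0) :
    saitoMap (hyperbolaParam h t) = hyperbolaParam h (h * t / (t + 1)) := by
  ext
  · exact (mul_div_left_comm t h (t + 1)).trans (mul_div_assoc' h t (t + 1))
  · change h / (t + 1) * (1 + t) / (1 + t * (h / (t + 1))) = h / (h * t / (t + 1) + 1)
    rw [add_comm 1 t, div_mul_cancel₀ h ht]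
    ring

end SaitoSaitoh

theorem saito_moebius_general (h t : ℂ) (ht : t + 1 ≠ 0) :
    ((t * (h / (t + 1)), (h / (t + 1)) * (1 + t) / (1 + t * (h / (t + 1)))) : ℂ × ℂ) =
      (h * t / (t + 1), h / (h * t / (t + 1) + 1)) :=
  saitoMap_hyperbolaParam h t ht

/-- For the Saito–Saitoh map `F` and the parametrization `P_h(t) = (t, h/(t+1))` of the
curve `y(1+x) = h`, one has `F(P_h(t)) = P_h(ht/(t+1))`. -/
theorem saito_moebius (h t : ℂ) (ht : t + 1 ≠ 0) (ht2 : t + 1 + h * t ≠ 0) :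
    ((t * (h / (t + 1)), (h / (t + 1)) * (1 + t) / (1 + t * (h / (t + 1)))) : ℂ × ℂ) =
      (h * t / (t + 1), h / (h * t / (t + 1) + 1)) :=
  saito_moebius_general h t ht
end

section
/- The vector field X(x,y) = (-x(1+x)(y-1), xy(y-1)) is a Lie symmetry of the map F(x,y) = (xy, y(1+x)/(1+xy)): X(F(x,y)) = DF(x,y)·X(x,y) for all x, y with 1 + xy ≠ 0. -/
/-- The vector field `X(x,y) = (-x(1+x)(y-1), xy(y-1))` is a Lie symmetry of the
Saito–Saitoh map `F(x,y) = (xy, y(1+x)/(1+xy))`: `X(F(x,y)) = DF(x,y) · X(x,y)`. -/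
theorem saito_lie_symmetry (x y : ℂ) (h : 1 + x * y ≠ 0) :
    let F : ℂ × ℂ → ℂ × ℂ := fun p => (p.1 * p.2, p.2 * (1 + p.1) / (1 + p.1 * p.2))
    let X : ℂ × ℂ → ℂ × ℂ := fun p =>
      (-p.1 * (1 + p.1) * (p.2 - 1), p.1 * p.2 * (p.2 - 1))
    let DF : Matrix (Fin 2) (Fin 2) ℂ :=
      !![y, x; y * (1 - y) / (1 + x * y) ^ 2, (1 + x) / (1 + x * y) ^ 2]
    ![(X (F (x, y))).1, (X (F (x, y))).2] = DF.mulVec ![(X (x, y)).1, (X (x, y)).2] := by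
  intro F X DF
  funext i
  fin_cases i <;>
    simp [F, X, DF, Matrix.mulVec, dotProduct, Fin.sum_univ_two] <;>
    field_simp <;> ring
end

section
/- For the map F(x,y) = (y, y(1+x)/(1+y)) and the parametrization P_h(t) = (t, h/(t+1)) of the curve y(1+x) = h, one has F(P_h(t)) = P_h(h/(t+1)) for all t where defined; i.e. the map induced on the parameter is the Möbius map M_h(t) = h/(t+1). -/
/-- For `F(x,y) = (y, y(1+x)/(1+y))` and `P_h(t) = (t, h/(t+1))`, one has
`F(P_h(t)) = P_h(h/(t+1))`: the induced map on the parameter is `M_h(t) = h/(t+1)`. -/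
theorem difference_eq_moebius (h : ℝ) (hh : h ≠ 0) (t : ℝ)
    (ht : t + 1 ≠ 0) (ht2 : t + 1 + h ≠ 0) :
    ((h / (t + 1), (h / (t + 1)) * (1 + t) / (1 + h / (t + 1))) : ℝ × ℝ) =
      (h / (t + 1), h / (h / (t + 1) + 1)) := by
  refine Prod.ext rfl ?_
  show h / (t + 1) * (1 + t) / (1 + h / (t + 1)) = h / (h / (t + 1) + 1)
  rw [add_comm 1 t, div_mul_cancel₀ h ht, add_comm 1 (h / (t + 1))]
end

section
/- The map Ψ(x,y) = (b x/(y - x), -b x y/((x - y)(y + b))) conjugates F_3(x,y) = (y, (-bx + by + y^2)/x) to F_4(x,y) = (y, (by + y^2)/(x + b)); that is, Ψ(F_3(x,y)) = F_4(Ψ(x,y)) wherever both sides are defined, and Ψ has the rational inverse Ψ^{-1}(x,y) = (bxy/((x-y)(x+b)), by/(x-y)). -/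
/-- `Ψ(x,y) = (bx/(y-x), -bxy/((x-y)(y+b)))` conjugates
`F₃(x,y) = (y, (-bx+by+y²)/x)` to `F₄(x,y) = (y, (by+y²)/(x+b))`, and has the rational
inverse `Ψ⁻¹(x,y) = (bxy/((x-y)(x+b)), by/(x-y))`. -/
theorem palladino_conjugation_F3_F4 (b : ℂ) (hb : b ≠ 0) :
    let F3 : ℂ × ℂ → ℂ × ℂ := fun p => (p.2, (-b * p.1 + b * p.2 + p.2 ^ 2) / p.1)
    let F4 : ℂ × ℂ → ℂ × ℂ := fun p => (p.2, (b * p.2 + p.2 ^ 2) / (p.1 + b))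
    let Ψ : ℂ × ℂ → ℂ × ℂ := fun p =>
      (b * p.1 / (p.2 - p.1), -b * p.1 * p.2 / ((p.1 - p.2) * (p.2 + b)))
    let Ψinv : ℂ × ℂ → ℂ × ℂ := fun p =>
      (b * p.1 * p.2 / ((p.1 - p.2) * (p.1 + b)), b * p.2 / (p.1 - p.2))
    (∀ x y : ℂ, x ≠ 0 → y ≠ 0 → x ≠ y → y + b ≠ 0 →
      (-b * x + b * y + y ^ 2) / x ≠ y → (-b * x + b * y + y ^ 2) / x + b ≠ 0 →
      b * x / (y - x) + b ≠ 0 →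
      Ψ (F3 (x, y)) = F4 (Ψ (x, y))) ∧
    (∀ x y : ℂ, x ≠ 0 → y ≠ 0 → x ≠ y → y + b ≠ 0 → Ψinv (Ψ (x, y)) = (x, y)) ∧
    (∀ x y : ℂ, x ≠ 0 → y ≠ 0 → x ≠ y → x + b ≠ 0 → Ψ (Ψinv (x, y)) = (x, y)) := by
  intro F3 F4 Ψ Ψinv
  refine ⟨?_, ?_, ?_⟩
  · intro x y hx hy hxy hyb h1 h2 h3
    have hxy' : x - y ≠ 0 := sub_ne_zero.mpr hxy
    have hyx : y - x ≠ 0 := sub_ne_zero.mpr (Ne.symm hxy)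
    have hw' : (-b * x + b * y + y ^ 2) / x - y ≠ 0 := sub_ne_zero.mpr h1
    simp only [F3, F4, Ψ, Prod.mk.injEq]
    have hfact : (-b * x + b * y + y ^ 2) / x - y = (y - x) * (y + b) / x := by
      field_simp; ring
    constructor
    · rw [hfact, div_div_eq_mul_div]
      rw [div_eq_div_iff (mul_ne_zero hyx hyb) (mul_ne_zero hxy' hyb)]
      ring
    · have hw2 : y - (-b * x + b * y + y ^ 2) / x ≠ 0 := sub_ne_zero.mpr (Ne.symm h1)
      rw [div_eq_div_iff (mul_ne_zero hw2 h2) h3]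
      field_simp
      ring
  · intro x y hx hy hxy hyb
    have hxy' : x - y ≠ 0 := sub_ne_zero.mpr hxy
    have hyx : y - x ≠ 0 := sub_ne_zero.mpr (Ne.symm hxy)
    simp only [Ψ, Ψinv, Prod.mk.injEq]
    have hsub : b * x / (y - x) - -b * x * y / ((x - y) * (y + b)) =
        -b ^ 2 * x / ((x - y) * (y + b)) := by
      field_simp; ring
    have hadd : b * x / (y - x) + b = b * y / (y - x) := by
      field_simp; ring
    rw [hsub, hadd]
    have hnum : -b ^ 2 * x ≠ 0 := by
      simp [hb, hx, pow_ne_zero]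
    have hd : -b ^ 2 * x / ((x - y) * (y + b)) ≠ 0 :=
      div_ne_zero hnum (mul_ne_zero hxy' hyb)
    constructor
    · rw [div_eq_iff (mul_ne_zero hd (div_ne_zero (mul_ne_zero hb hy) hyx))]
      field_simp
    · rw [div_eq_iff hd]
      field_simp
  · intro x y hx hy hxy hxb
    have hxy' : x - y ≠ 0 := sub_ne_zero.mpr hxy
    simp only [Ψ, Ψinv, Prod.mk.injEq]
    have hsub2 : b * y / (x - y) - b * x * y / ((x - y) * (x + b)) =
        b ^ 2 * y / ((x - y) * (x + b)) := by
      field_simp; ring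
    have hsub3 : b * x * y / ((x - y) * (x + b)) - b * y / (x - y) =
        -(b ^ 2) * y / ((x - y) * (x + b)) := by
      field_simp; ring
    have hadd2 : b * y / (x - y) + b = b * x / (x - y) := by
      field_simp; ring
    rw [hsub2, hsub3, hadd2]
    have hnum2 : b ^ 2 * y ≠ 0 := mul_ne_zero (pow_ne_zero 2 hb) hy
    have hd2 : b ^ 2 * y / ((x - y) * (x + b)) ≠ 0 :=
      div_ne_zero hnum2 (mul_ne_zero hxy' hxb)
    have hd3 : -(b ^ 2) * y / ((x - y) * (x + b)) ≠ 0 :=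
      div_ne_zero (by simpa using hnum2) (mul_ne_zero hxy' hxb)
    constructor
    · rw [div_eq_iff hd2]
      field_simp
    · rw [div_eq_iff (mul_ne_zero hd3 (div_ne_zero (mul_ne_zero hb hx) hxy'))]
      field_simp
end

section
/- The map Ψ(x,y) = (-(bx+1)/x, -(by+1)/y) conjugates F_2(x,y) = (y, x/(1 + b(y - x))) to F_5(x,y) = (y, (by + xy)/(y + b)); that is, Ψ(F_2(x,y)) = F_5(Ψ(x,y)) wherever defined, and Ψ^{-1}(x,y) = (-1/(x+b), -1/(y+b)). -/
/-! Both `Ψ` and `Ψ⁻¹` act coordinatewise by the Möbius maps `t ↦ -(b t + 1)/t` and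
`t ↦ -1/(t + b)`, which are mutually inverse. For the conjugation, the identity
`-(b t + 1)/t + b = -1/t` makes both `Ψ (F₂ (x, y))` and `F₅ (Ψ (x, y))` have second
coordinate `-(b y + 1)/x`. -/

namespace Palladino

variable {K : Type*} [Field K]

def psiCoord (b t : K) : K := -(b * t + 1) / t

def psiCoordInv (b t : K) : K := -1 / (t + b)

theorem psiCoord_add {t : K} (b : K) (ht : t ≠ 0) : psiCoord b t + b = -1 / t := by
  unfold psiCoord
  field_simp
  ring

theorem psiCoordInv_psiCoord {t : K} (b : K) (ht : t ≠ 0) : psiCoordInv b (psiCoord b t) = t := by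
  rw [psiCoordInv, psiCoord_add b ht, div_div_cancel₀ (neg_ne_zero.mpr one_ne_zero)]

theorem psiCoord_psiCoordInv {b t : K} (ht : t + b ≠ 0) : psiCoord b (psiCoordInv b t) = t := by
  unfold psiCoord psiCoordInv
  field_simp
  ring

theorem psiCoord_div {b x y : K} (hx : x ≠ 0) (hd : 1 + b * (y - x) ≠ 0) :
    psiCoord b (x / (1 + b * (y - x))) = -(b * y + 1) / x := by
  unfold psiCoord
  field_simp
  ring

theorem psiCoord_conj {b x y : K} (hx : x ≠ 0) (hy : y ≠ 0) :
    (b * psiCoord b y + psiCoord b x * psiCoord b y) / (psiCoord b y + b) = -(b * y + 1) / x := by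
  have hsum : b * psiCoord b y + psiCoord b x * psiCoord b y = psiCoord b y * (-1 / x) := by
    rw [← psiCoord_add b hx]
    ring
  rw [hsum, psiCoord_add b hy, psiCoord]
  field_simp

end Palladino

theorem palladino_conjugation_F2_F5_general (b : ℂ) :
    let F2 : ℂ × ℂ → ℂ × ℂ := fun p => (p.2, p.1 / (1 + b * (p.2 - p.1)))
    let F5 : ℂ × ℂ → ℂ × ℂ := fun p => (p.2, (b * p.2 + p.1 * p.2) / (p.2 + b))
    let Ψ : ℂ × ℂ → ℂ × ℂ := fun p => (-(b * p.1 + 1) / p.1, -(b * p.2 + 1) / p.2)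
    let Ψinv : ℂ × ℂ → ℂ × ℂ := fun p => (-1 / (p.1 + b), -1 / (p.2 + b))
    (∀ x y : ℂ, x ≠ 0 → y ≠ 0 → 1 + b * (y - x) ≠ 0 →
      Ψ (F2 (x, y)) = F5 (Ψ (x, y))) ∧
    (∀ x y : ℂ, x ≠ 0 → y ≠ 0 → Ψinv (Ψ (x, y)) = (x, y)) ∧
    (∀ x y : ℂ, x + b ≠ 0 → y + b ≠ 0 → Ψ (Ψinv (x, y)) = (x, y)) := by
  intro F2 F5 Ψ Ψinv
  refine ⟨fun x y hx hy hd => ?_, fun x y hx hy => ?_, fun x y hx hy => ?_⟩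
  · exact Prod.ext rfl ((Palladino.psiCoord_div hx hd).trans (Palladino.psiCoord_conj hx hy).symm)
  · exact Prod.ext (Palladino.psiCoordInv_psiCoord b hx) (Palladino.psiCoordInv_psiCoord b hy)
  · exact Prod.ext (Palladino.psiCoord_psiCoordInv hx) (Palladino.psiCoord_psiCoordInv hy)

/-- `Ψ(x,y) = (-(bx+1)/x, -(by+1)/y)` conjugates `F₂(x,y) = (y, x/(1+b(y-x)))` to
`F₅(x,y) = (y, (by+xy)/(y+b))`, with inverse `Ψ⁻¹(x,y) = (-1/(x+b), -1/(y+b))`. -/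
theorem palladino_conjugation_F2_F5 (b : ℂ) (hb : b ≠ 0) :
    let F2 : ℂ × ℂ → ℂ × ℂ := fun p => (p.2, p.1 / (1 + b * (p.2 - p.1)))
    let F5 : ℂ × ℂ → ℂ × ℂ := fun p => (p.2, (b * p.2 + p.1 * p.2) / (p.2 + b))
    let Ψ : ℂ × ℂ → ℂ × ℂ := fun p => (-(b * p.1 + 1) / p.1, -(b * p.2 + 1) / p.2)
    let Ψinv : ℂ × ℂ → ℂ × ℂ := fun p => (-1 / (p.1 + b), -1 / (p.2 + b))
    (∀ x y : ℂ, x ≠ 0 → y ≠ 0 → 1 + b * (y - x) ≠ 0 →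
      Ψ (F2 (x, y)) = F5 (Ψ (x, y))) ∧
    (∀ x y : ℂ, x ≠ 0 → y ≠ 0 → Ψinv (Ψ (x, y)) = (x, y)) ∧
    (∀ x y : ℂ, x + b ≠ 0 → y + b ≠ 0 → Ψ (Ψinv (x, y)) = (x, y)) :=
  palladino_conjugation_F2_F5_general b
end

section
/- For the map F(x,y) = (y, (a - y + y^2)/x) with invariant conics C_h = {x^2 + y^2 - x - y + a - h x y = 0}, and the parametrization P_h(t) with components P_{1,h}(t) = (2δt - ah^2 - (1+δ)h - 2 + 4a)/(2(-t^2 + ht - 1)) + a and P_{2,h}(t) = ((-ah + δ - 1)t^2 + (4a - 2)t - ah - δ - 1)/(2(-t^2 + ht - 1)), where δ^2 = (ah+1)^2 - 4a^2, one has the identity F(P_h(t)) = P_h(((h+1)t - 1)/(t + 1)) for all t where both sides are defined. -/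
/-!
With `Q(t) = -t² + ht - 1` and `M(t) = ((h+1)t - 1)/(t + 1)`, the fixed points of `M` are the
roots of `Q`, and indeed `Q(M t) = (h+2) Q(t)/(t+1)²`; so `P(M t)` has an explicit common
denominator and `P₁(M t) = P₂(t)` is a polynomial identity. For fixed `y`, `C_h` is the quadratic
`x² - (1 + hy)x + (y² - y + a) = 0`, so by Vieta `F` sends `(x, y) ∈ C_h` to `(y, 1 + hy - x)`;
the second coordinate then reduces to the identity `P₂(M t) = 1 + h P₂(t) - P₁(t)`. Only the fact
that `P t` lies on `C_h` uses `δ² = (ah+1)² - 4a²`.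
-/

def OnConic (a h x y : ℝ) : Prop := x ^ 2 + y ^ 2 - x - y + a - h * x * y = 0

def paramDenom (h t : ℝ) : ℝ := -t ^ 2 + h * t - 1

noncomputable def paramFst (a h δ t : ℝ) : ℝ :=
  (2 * δ * t - a * h ^ 2 - (1 + δ) * h - 2 + 4 * a) / (2 * paramDenom h t) + a

noncomputable def paramSnd (a h δ t : ℝ) : ℝ :=
  ((-a * h + δ - 1) * t ^ 2 + (4 * a - 2) * t - a * h - δ - 1) / (2 * paramDenom h t)

noncomputable def moebius (h t : ℝ) : ℝ := ((h + 1) * t - 1) / (t + 1)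

theorem paramDenom_moebius {h t : ℝ} (ht : t + 1 ≠ 0) :
    paramDenom h (moebius h t) = (h + 2) * paramDenom h t / (t + 1) ^ 2 := by
  unfold paramDenom moebius
  field_simp
  ring

theorem div_eq_of_onConic {a h x y : ℝ} (hC : OnConic a h x y) (hx : x ≠ 0) :
    (a - y + y ^ 2) / x = 1 + h * y - x := by
  rw [div_eq_iff hx]
  unfold OnConic at hC
  linear_combination hC

theorem onConic_param {a h δ t : ℝ} (hδ : δ ^ 2 = (a * h + 1) ^ 2 - 4 * a ^ 2)
    (hQ : paramDenom h t ≠ 0) : OnConic a h (paramFst a h δ t) (paramSnd a h δ t) := by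
  unfold OnConic paramFst paramSnd
  field_simp
  unfold paramDenom
  linear_combination (-t ^ 2 + h * t - 1) ^ 2 * hδ

theorem paramFst_moebius {a h δ t : ℝ} (ht : t + 1 ≠ 0) (hh : h + 2 ≠ 0)
    (hQ : paramDenom h t ≠ 0) :
    paramFst a h δ (moebius h t) = paramSnd a h δ t := by
  rw [paramFst, paramSnd, paramDenom_moebius ht]
  unfold moebius
  field_simp
  unfold paramDenom
  ring

theorem paramSnd_moebius {a h δ t : ℝ} (ht : t + 1 ≠ 0) (hh : h + 2 ≠ 0)
    (hQ : paramDenom h t ≠ 0) :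
    paramSnd a h δ (moebius h t) = 1 + h * paramSnd a h δ t - paramFst a h δ t := by
  rw [paramFst, paramSnd, paramSnd, paramDenom_moebius ht]
  unfold moebius
  field_simp
  unfold paramDenom
  ring

theorem BR_parametrization_moebius_general (a h : ℝ)
    (hd : (a * h + 1) ^ 2 - 4 * a ^ 2 ≥ 0) :
    let δ : ℝ := Real.sqrt ((a * h + 1) ^ 2 - 4 * a ^ 2)
    let P1 : ℝ → ℝ := fun t =>
      (2 * δ * t - a * h ^ 2 - (1 + δ) * h - 2 + 4 * a) / (2 * (-t ^ 2 + h * t - 1)) + a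
    let P2 : ℝ → ℝ := fun t =>
      ((-a * h + δ - 1) * t ^ 2 + (4 * a - 2) * t - a * h - δ - 1) /
        (2 * (-t ^ 2 + h * t - 1))
    ∀ t : ℝ, -t ^ 2 + h * t - 1 ≠ 0 → t + 1 ≠ 0 →
      -(((h + 1) * t - 1) / (t + 1)) ^ 2 + h * (((h + 1) * t - 1) / (t + 1)) - 1 ≠ 0 →
      P1 t ≠ 0 →
      ((P2 t, (a - P2 t + (P2 t) ^ 2) / (P1 t)) : ℝ × ℝ) =
        (P1 (((h + 1) * t - 1) / (t + 1)), P2 (((h + 1) * t - 1) / (t + 1))) := by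
  intro δ P1 P2 t hQ ht hQM hP1
  change paramDenom h t ≠ 0 at hQ
  change paramDenom h (moebius h t) ≠ 0 at hQM
  change paramFst a h δ t ≠ 0 at hP1
  change (paramSnd a h δ t, (a - paramSnd a h δ t + paramSnd a h δ t ^ 2) / paramFst a h δ t)
    = (paramFst a h δ (moebius h t), paramSnd a h δ (moebius h t))
  have hh : h + 2 ≠ 0 := by
    rintro hh
    simp [paramDenom_moebius ht, hh] at hQM
  have hC : OnConic a h (paramFst a h δ t) (paramSnd a h δ t) :=
    onConic_param (Real.sq_sqrt hd) hQ
  rw [paramFst_moebius ht hh hQ, paramSnd_moebius ht hh hQ, div_eq_of_onConic hC hP1]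

/-- For `F(x,y) = (y, (a-y+y²)/x)` and the parametrization `P_h` of the invariant conic
`C_h`, one has `F(P_h(t)) = P_h(((h+1)t-1)/(t+1))` wherever both sides are defined. -/
theorem BR_parametrization_moebius (a h : ℝ) (ha : a > 1 / 4)
    (hd : (a * h + 1) ^ 2 - 4 * a ^ 2 ≥ 0) :
    let δ : ℝ := Real.sqrt ((a * h + 1) ^ 2 - 4 * a ^ 2)
    let P1 : ℝ → ℝ := fun t =>
      (2 * δ * t - a * h ^ 2 - (1 + δ) * h - 2 + 4 * a) / (2 * (-t ^ 2 + h * t - 1)) + a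
    let P2 : ℝ → ℝ := fun t =>
      ((-a * h + δ - 1) * t ^ 2 + (4 * a - 2) * t - a * h - δ - 1) /
        (2 * (-t ^ 2 + h * t - 1))
    ∀ t : ℝ, -t ^ 2 + h * t - 1 ≠ 0 → t + 1 ≠ 0 →
      -(((h + 1) * t - 1) / (t + 1)) ^ 2 + h * (((h + 1) * t - 1) / (t + 1)) - 1 ≠ 0 →
      P1 t ≠ 0 →
      ((P2 t, (a - P2 t + (P2 t) ^ 2) / (P1 t)) : ℝ × ℝ) =
        (P1 (((h + 1) * t - 1) / (t + 1)), P2 (((h + 1) * t - 1) / (t + 1))) :=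
  BR_parametrization_moebius_general a h hd
end
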